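/- arXiv:1710.09328 — 5 statements merged into one kernel-verified Lean document; each statement's English description precedes it below -/
import Mathlib

section
/- For every natural number C, the number of pairs (x,y) ∈ ℤ² with x² + y² = 5^C equals 4·(C+1). -/
/-!
In `ℤ[i]` we have `5 = (2 + i)(2 - i)`, a product of two non-associated primes. A Gaussian integer
`w` of norm `5 ^ C` divides `w * star w = (2 + i) ^ C * (2 - i) ^ C`, so by unique factorization
it is `u * (2 + i) ^ a * (2 - i) ^ (C - a)` for a unit `u` and some `a ≤ C`; comparing the
multiplicity of `2 + i` shows that `(u, a)` is unique. As `x ^ 2 + y ^ 2` is the norm of `x + y i`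
and `ℤ[i]` has four units, there are `4 * (C + 1)` solutions.
-/

section PrimePowers

variable {α : Type*} [CommMonoidWithZero α] [IsCancelMulZero α] {p q : α}

theorem exists_associated_pow_mul_pow_of_dvd [DecompositionMonoid α] (hp : Prime p)
    (hq : Prime q) {x : α} {m n : ℕ} (h : x ∣ p ^ m * q ^ n) :
    ∃ i ≤ m, ∃ j ≤ n, Associated x (p ^ i * q ^ j) := by
  obtain ⟨y, z, hy, hz, rfl⟩ := exists_dvd_and_dvd_of_dvd_mul h
  obtain ⟨i, hi, hy⟩ := (dvd_prime_pow hp m).1 hy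
  obtain ⟨j, hj, hz⟩ := (dvd_prime_pow hq n).1 hz
  exact ⟨i, hi, j, hj, hy.mul_mul hz⟩

theorem emultiplicity_pow_mul_pow (hp : Prime p) (hpq : ¬p ∣ q) (i j : ℕ) :
    emultiplicity p (p ^ i * q ^ j) = i := by
  rw [emultiplicity_mul hp, emultiplicity_pow_self_of_prime hp,
    emultiplicity_eq_zero.2 fun h => hpq (hp.dvd_of_dvd_pow h), add_zero]

theorem Associated.eq_of_pow_mul_pow (hp : Prime p) (hpq : ¬p ∣ q) {i j k l : ℕ}
    (h : Associated (p ^ i * q ^ j) (p ^ k * q ^ l)) : i = k := by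
  have := emultiplicity_eq_of_associated_right (a := p) h
  rwa [emultiplicity_pow_mul_pow hp hpq, emultiplicity_pow_mul_pow hp hpq, Nat.cast_inj] at this

end PrimePowers

local notation "ℤ[i]" => GaussianInt

namespace GaussianInt

def twoAddI : ℤ[i] := ⟨2, 1⟩

theorem norm_twoAddI : twoAddI.norm = 5 := rfl

theorem twoAddI_mul_star : twoAddI * star twoAddI = 5 := by decide

theorem prime_of_prime_norm {z : ℤ[i]} (h : Prime z.norm) : Prime z := by
  have : IsLocalHom (Zsqrtd.normMonoidHom (d := -1)) :=
    ⟨fun z hz => (Zsqrtd.isUnit_iff_norm_isUnit z).2 hz⟩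
  exact irreducible_iff_prime.1 (h.irreducible.of_map (f := Zsqrtd.normMonoidHom))

theorem prime_twoAddI : Prime twoAddI :=
  prime_of_prime_norm (by rw [norm_twoAddI]; norm_num)

theorem prime_star_twoAddI : Prime (star twoAddI) :=
  prime_of_prime_norm (by rw [Zsqrtd.norm_conj, norm_twoAddI]; norm_num)

theorem not_twoAddI_dvd_star : ¬twoAddI ∣ star twoAddI := by
  intro h
  have h4 : twoAddI ∣ 4 := by
    simpa only [show twoAddI + star twoAddI = 4 by decide] using dvd_add dvd_rfl h
  have : (5 : ℤ) ∣ 16 := map_dvd Zsqrtd.normMonoidHom h4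
  norm_num at this

theorem norm_twoAddI_pow_mul_star_pow (a b : ℕ) :
    (twoAddI ^ a * star twoAddI ^ b).norm = 5 ^ (a + b) := by
  change Zsqrtd.normMonoidHom (twoAddI ^ a * star twoAddI ^ b) = _
  rw [map_mul, map_pow, map_pow, pow_add]
  rfl

theorem exists_associated_of_norm_eq_five_pow {w : ℤ[i]} {C : ℕ} (hw : w.norm = 5 ^ C) :
    ∃ a ≤ C, Associated w (twoAddI ^ a * star twoAddI ^ (C - a)) := by
  have hdvd : w ∣ twoAddI ^ C * star twoAddI ^ C := by
    rw [← mul_pow, twoAddI_mul_star]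
    exact ⟨star w, by rw [← Zsqrtd.norm_eq_mul_conj, hw]; push_cast; rfl⟩
  obtain ⟨a, ha, b, -, hab⟩ :=
    exists_associated_pow_mul_pow_of_dvd prime_twoAddI prime_star_twoAddI hdvd
  have hnorm : (5 : ℤ) ^ C = 5 ^ (a + b) := by
    rw [← hw, Zsqrtd.norm_eq_of_associated (by norm_num) hab, norm_twoAddI_pow_mul_star_pow]
  obtain rfl : C = a + b := pow_right_injective₀ (by norm_num) (by norm_num) hnorm
  exact ⟨a, ha, by rwa [Nat.add_sub_cancel_left]⟩

theorem setOf_isUnit_eq :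
    {u : ℤ[i] | IsUnit u} = ↑({1, -1, ⟨0, 1⟩, ⟨0, -1⟩} : Finset ℤ[i]) := by
  ext ⟨x, y⟩
  rw [Set.mem_ofPred_eq, ← Zsqrtd.norm_eq_one_iff' (by norm_num), Zsqrtd.norm_def]
  simp only [Finset.coe_insert, Finset.coe_singleton, Set.mem_insert_iff,
    Set.mem_singleton_iff, Zsqrtd.ext_iff, Zsqrtd.re_one, Zsqrtd.im_one,
    Zsqrtd.re_neg, Zsqrtd.im_neg, neg_zero]
  constructor
  · intro h
    obtain ⟨hx₁, hx₂⟩ : -1 ≤ x ∧ x ≤ 1 := by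
      constructor <;> nlinarith [mul_self_nonneg y]
    obtain ⟨hy₁, hy₂⟩ : -1 ≤ y ∧ y ≤ 1 := by
      constructor <;> nlinarith [mul_self_nonneg x]
    interval_cases x <;> interval_cases y <;> omega
  · rintro (⟨rfl, rfl⟩ | ⟨rfl, rfl⟩ | ⟨rfl, rfl⟩ | ⟨rfl, rfl⟩) <;> norm_num

theorem ncard_setOf_isUnit : {u : ℤ[i] | IsUnit u}.ncard = 4 := by
  rw [setOf_isUnit_eq, Set.ncard_coe_finset]
  rfl

theorem image_unit_mul_eq_setOf_norm_eq_five_pow (C : ℕ) :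
    (fun p : ℤ[i] × ℕ => p.1 * (twoAddI ^ p.2 * star twoAddI ^ (C - p.2))) ''
      ({u | IsUnit u} ×ˢ Set.Iic C) = {w | w.norm = 5 ^ C} := by
  ext w
  constructor
  · rintro ⟨⟨u, a⟩, ⟨hu, ha⟩, rfl⟩
    rw [Set.mem_ofPred_eq, Zsqrtd.norm_eq_of_associated (by norm_num)
      (associated_unit_mul_left _ u hu), norm_twoAddI_pow_mul_star_pow,
      Nat.add_sub_cancel' (Set.mem_Iic.1 ha)]
  · intro hw
    obtain ⟨a, ha, hassoc⟩ := exists_associated_of_norm_eq_five_pow hw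
    obtain ⟨v, hv⟩ := hassoc.symm
    exact ⟨(v, a), ⟨v.isUnit, ha⟩, by rw [← hv, mul_comm]⟩

theorem injOn_unit_mul (C : ℕ) :
    Set.InjOn (fun p : ℤ[i] × ℕ => p.1 * (twoAddI ^ p.2 * star twoAddI ^ (C - p.2)))
      ({u | IsUnit u} ×ˢ Set.Iic C) := by
  rintro ⟨u, a⟩ ⟨hu, -⟩ ⟨v, b⟩ ⟨hv, -⟩ h
  dsimp only at h
  have hab : Associated (twoAddI ^ a * star twoAddI ^ (C - a))
      (twoAddI ^ b * star twoAddI ^ (C - b)) :=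
    (associated_unit_mul_left _ u hu).symm.trans (h ▸ associated_unit_mul_left _ v hv)
  obtain rfl := hab.eq_of_pow_mul_pow prime_twoAddI not_twoAddI_dvd_star
  refine Prod.ext (mul_right_cancel₀ ?_ h) rfl
  exact mul_ne_zero (pow_ne_zero _ prime_twoAddI.ne_zero)
    (pow_ne_zero _ prime_star_twoAddI.ne_zero)

theorem ncard_setOf_norm_eq_five_pow (C : ℕ) :
    {w : ℤ[i] | w.norm = 5 ^ C}.ncard = 4 * (C + 1) := by
  rw [← image_unit_mul_eq_setOf_norm_eq_five_pow, (injOn_unit_mul C).ncard_image,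
    Set.ncard_prod, ncard_setOf_isUnit, Set.ncard_Iic_nat]

theorem ncard_setOf_sq_add_sq_eq (n : ℤ) :
    {z : ℤ × ℤ | z.1 ^ 2 + z.2 ^ 2 = n}.ncard = {w : ℤ[i] | w.norm = n}.ncard := by
  have hpre : {z : ℤ × ℤ | z.1 ^ 2 + z.2 ^ 2 = n} =
      (fun z : ℤ × ℤ => (⟨z.1, z.2⟩ : ℤ[i])) ⁻¹' {w | w.norm = n} := by
    ext z
    simp only [Set.mem_ofPred_eq, Set.mem_preimage, Zsqrtd.norm_def]
    ring_nf
  rw [hpre, Set.ncard_preimage_of_injective_subset_range]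
  · exact fun z z' h => Prod.ext (congrArg Zsqrtd.re h) (congrArg Zsqrtd.im h)
  · exact fun w _ => ⟨(w.re, w.im), rfl⟩

end GaussianInt

theorem stmt_0 (C : ℕ) :
    {z : ℤ × ℤ | z.1 ^ 2 + z.2 ^ 2 = (5 : ℤ) ^ C}.ncard = 4 * (C + 1) := by
  rw [GaussianInt.ncard_setOf_sq_add_sq_eq, GaussianInt.ncard_setOf_norm_eq_five_pow]
end

section
/- Let λ be a positive integer with prime factorization λ = p₁^{a₁}⋯p_n^{a_n}·q₁^{b₁}⋯q_l^{b_l}·2^c, where each p_i is a prime ≡ 1 (mod 4) and each q_j is a prime ≡ 3 (mod 4). Then the number of pairs (x,y) ∈ ℤ² with x² + y² = λ equals 4·(1+a₁)⋯(1+a_n) if all b_j are even, and 0 otherwise. -/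
/-!
Count Gaussian integers of norm `λ` instead of pairs `(x, y)`. Multiplication by `g ≠ 0` maps the
elements of norm `m` bijectively onto the multiples of `g` of norm `N(g) m`. A prime
`q ≡ 3 (mod 4)` stays prime in `ℤ[i]`, and so does `1 + i`; both divide every Gaussian integer
whose norm they divide, whence `r₂(2m) = r₂(m)`, `r₂(q²m) = r₂(m)`, and `r₂(qm) = 0` when
`q ∤ m`. A prime `p ≡ 1 (mod 4)` splits as `p = π π̄` with `π ∤ π̄`; if `p ∤ m`, an element of
norm `p^(a+1) m` is either divisible by `π` or, failing that, by `π̄^(a+1)`. Hence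
`r₂(p^(a+1) m) = r₂(p^a m) + r₂(m)`, so `r₂(p^a m) = (1 + a) r₂(m)`. Finally `r₂(1) = 4`,
counting the units.
-/

local notation "ℤ[i]" => GaussianInt

open Zsqrtd GaussianInt

theorem star_dvd_of_dvd_star {R : Type*} [CommMonoid R] [StarMul R] {a b : R} (h : a ∣ star b) :
    star a ∣ b := by
  obtain ⟨c, hc⟩ := h
  exact ⟨star c, by rw [← star_star b, hc, star_mul, mul_comm]⟩

theorem Nat.Coprime.prod_pow_of_prime_ne {ι : Type*} {s : Finset ι} {p : ι → ℕ} {r : ℕ}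
    (hr : r.Prime) (hp : ∀ j ∈ s, (p j).Prime ∧ p j ≠ r) (e : ι → ℕ) :
    r.Coprime (∏ j ∈ s, p j ^ e j) :=
  Nat.Coprime.prod_right fun j hj =>
    ((Nat.coprime_primes hr (hp j hj).1).2 (hp j hj).2.symm).pow_right _

namespace Zsqrtd

variable {d : ℤ}

theorem irreducible_of_prime_natAbs_norm {x : ℤ√d} (hx : x.norm.natAbs.Prime) : Irreducible x := by
  refine ⟨fun hu => hx.ne_one (norm_eq_one_iff.2 hu), fun a b hab => ?_⟩
  rw [hab, norm_mul, Int.natAbs_mul, Nat.prime_mul_iff] at hx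
  rcases hx with ⟨-, hb⟩ | ⟨-, ha⟩
  · exact Or.inr (norm_eq_one_iff.1 hb)
  · exact Or.inl (norm_eq_one_iff.1 ha)

theorem dvd_or_star_dvd_of_dvd_norm {π z : ℤ√d} (hπ : Prime π) (h : π ∣ (z.norm : ℤ√d)) :
    π ∣ z ∨ star π ∣ z := by
  rw [norm_eq_mul_conj] at h
  exact (hπ.dvd_or_dvd h).imp id star_dvd_of_dvd_star

theorem norm_star_pow (π : ℤ√d) (n : ℕ) : (star π ^ n).norm = π.norm ^ n := by
  rw [← norm_conj π]
  exact map_pow normMonoidHom _ n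

end Zsqrtd

namespace GaussianInt

theorem prime_of_norm_eq_prime {p : ℕ} (hp : p.Prime) {π : ℤ[i]} (hπ : π.norm = p) : Prime π :=
  irreducible_iff_prime.1 <| irreducible_of_prime_natAbs_norm <| by rwa [hπ, Int.natAbs_natCast]

theorem natCast_dvd_of_dvd_norm {q : ℕ} (hq : q.Prime) (hq3 : q % 4 = 3) {z : ℤ[i]}
    (h : (q : ℤ) ∣ z.norm) : (q : ℤ[i]) ∣ z := by
  have := Fact.mk hq
  have hdvd : (q : ℤ[i]) ∣ (z.norm : ℤ[i]) := by exact_mod_cast Int.cast_dvd_cast _ _ h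
  simpa using dvd_or_star_dvd_of_dvd_norm (prime_of_nat_prime_of_mod_four_eq_three q hq3) hdvd

-- `π + π̄ = 2 re π` and `i (π - π̄) = -2 im π`, so `p ∣ re π` and `p ∣ im π`, whence `p² ∣ p`.
theorem not_dvd_star_of_norm_eq_prime {p : ℕ} (hp : p.Prime) (hp2 : p ≠ 2) {π : ℤ[i]}
    (hπ : π.norm = p) : ¬ π ∣ star π := by
  intro h
  have hdvd (k : ℤ) (hk : π ∣ ((2 * k : ℤ) : ℤ[i])) : (p : ℤ) ∣ k := by
    have hk : π.norm ∣ ((2 * k : ℤ) : ℤ[i]).norm := map_dvd normMonoidHom hk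
    rw [hπ, norm_intCast] at hk
    have hcop : IsCoprime (p : ℤ) 2 := by
      exact_mod_cast Nat.isCoprime_iff_coprime.2 ((Nat.coprime_primes hp Nat.prime_two).2 hp2)
    exact hcop.dvd_of_dvd_mul_left ((Nat.prime_iff_prime_int.1 hp).dvd_of_dvd_pow (n := 2)
      (by rwa [sq]))
  obtain ⟨r, hr⟩ := hdvd π.re (by
    convert dvd_add (dvd_refl π) h using 1; ext <;> simp; ring)
  obtain ⟨s, hs⟩ := hdvd (-π.im) (by
    convert (dvd_sub (dvd_refl π) h).mul_left ⟨0, 1⟩ using 1; ext <;> simp; ring)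
  have hps : (p : ℤ) * (p * (r ^ 2 + s ^ 2)) = p * 1 := by
    rw [norm_def] at hπ
    linear_combination hπ - (π.re + p * r) * hr - (p * s - π.im) * hs
  have h1 := Int.eq_one_of_mul_eq_one_right (by positivity)
    (mul_left_cancel₀ (by exact_mod_cast hp.ne_zero) hps)
  exact hp.one_lt.ne' (by exact_mod_cast h1)

theorem not_dvd_iff_star_pow_dvd {p m n : ℕ} (hp : p.Prime) (hp2 : p ≠ 2) (hm : ¬ p ∣ m)
    {π z : ℤ[i]} (hπ : π.norm = p) (hz : z.norm = (p ^ n * m : ℕ)) :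
    ¬ π ∣ z ↔ star π ^ n ∣ z := by
  have hπp := prime_of_norm_eq_prime hp hπ
  constructor
  · intro h
    have hpow : π ^ n ∣ z * star z := by
      rw [← norm_eq_mul_conj, hz]
      push_cast
      exact (pow_dvd_pow_of_dvd ⟨star π, by rw [← norm_eq_mul_conj, hπ, Int.cast_natCast]⟩
        n).mul_right _
    simpa [star_pow] using star_dvd_of_dvd_star (hπp.pow_dvd_of_dvd_mul_left n h hpow)
  · rintro ⟨w, rfl⟩ hπw
    rw [Zsqrtd.norm_mul, norm_star_pow, hπ] at hz
    push_cast at hz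
    rcases hπp.dvd_or_dvd hπw with h | ⟨v, rfl⟩
    · exact not_dvd_star_of_norm_eq_prime hp hp2 hπ (hπp.dvd_of_dvd_pow h)
    · have hv := mul_left_cancel₀ (pow_ne_zero n (by exact_mod_cast hp.ne_zero)) hz
      rw [Zsqrtd.norm_mul, hπ] at hv
      exact hm (by exact_mod_cast Dvd.intro _ hv)

theorem finite_setOf_norm_eq (n : ℤ) : {z : ℤ[i] | z.norm = n}.Finite := by
  refine ((Set.finite_Icc ((-n, -n) : ℤ × ℤ) (n, n)).preimage
    (f := fun z : ℤ[i] => (z.re, z.im)) fun z _ w _ h => ?_).subset fun z hz => ?_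
  · exact Zsqrtd.ext (congrArg Prod.fst h) (congrArg Prod.snd h)
  · have hz : z.re ^ 2 + z.im ^ 2 = n := by rw [← hz, norm_def]; ring
    simp only [Set.mem_preimage, Set.mem_Icc, Prod.mk_le_mk]
    have := Int.le_self_sq z.re; have := Int.le_self_sq (-z.re)
    have := Int.le_self_sq z.im; have := Int.le_self_sq (-z.im)
    refine ⟨⟨?_, ?_⟩, ?_, ?_⟩ <;> nlinarith [sq_nonneg z.re, sq_nonneg z.im]

theorem ncard_norm_eq_mul_and_dvd {g : ℤ[i]} (hg : g ≠ 0) (m : ℤ) :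
    {z : ℤ[i] | z.norm = g.norm * m ∧ g ∣ z}.ncard = {z : ℤ[i] | z.norm = m}.ncard := by
  rw [← Set.ncard_image_of_injective {z : ℤ[i] | z.norm = m} (mul_right_injective₀ hg)]
  congr 1
  ext z
  constructor
  · rintro ⟨hz, w, rfl⟩
    rw [Zsqrtd.norm_mul] at hz
    exact ⟨w, mul_left_cancel₀ (norm_pos.2 hg).ne' hz, rfl⟩
  · rintro ⟨w, hw : w.norm = m, rfl⟩
    exact ⟨by rw [Zsqrtd.norm_mul, hw], dvd_mul_right _ _⟩

end GaussianInt

noncomputable def r₂ (n : ℕ) : ℕ := {z : ℤ[i] | z.norm = n}.ncard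

theorem ncard_sq_add_sq_eq_r₂ (n : ℕ) :
    {z : ℤ × ℤ | z.1 ^ 2 + z.2 ^ 2 = (n : ℤ)}.ncard = r₂ n := by
  rw [r₂, ← Set.ncard_image_of_injective _ (f := fun z : ℤ × ℤ => (⟨z.1, z.2⟩ : ℤ[i]))
    fun z w h => Prod.ext (congrArg Zsqrtd.re h) (congrArg Zsqrtd.im h)]
  congr 1
  ext z
  constructor
  · rintro ⟨w, hw, rfl⟩
    show _ = _
    rw [norm_def, ← hw]
    ring
  · intro hz
    exact ⟨(z.re, z.im), by show _ = _; rw [← hz, norm_def]; ring, rfl⟩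

theorem r₂_one : r₂ 1 = 4 := by
  have hunits : {z : ℤ[i] | z.norm = (1 : ℕ)} =
      ({⟨1, 0⟩, ⟨-1, 0⟩, ⟨0, 1⟩, ⟨0, -1⟩} : Finset ℤ[i]) := by
    ext ⟨x, y⟩
    simp only [Set.mem_ofPred_eq, norm_def, Finset.coe_insert, Finset.coe_singleton,
      Set.mem_insert_iff, Set.mem_singleton_iff, Zsqrtd.ext_iff]
    constructor
    · intro h
      replace h : x * x + y * y = 1 := by push_cast at h; linarith
      have : x ≤ 1 := by nlinarith [mul_self_nonneg y]
      have : -1 ≤ x := by nlinarith [mul_self_nonneg y]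
      have : y ≤ 1 := by nlinarith [mul_self_nonneg x]
      have : -1 ≤ y := by nlinarith [mul_self_nonneg x]
      interval_cases x <;> interval_cases y <;> simp_all
    · rintro (⟨rfl, rfl⟩ | ⟨rfl, rfl⟩ | ⟨rfl, rfl⟩ | ⟨rfl, rfl⟩) <;> norm_num
  rw [r₂, hunits, Set.ncard_coe_finset]
  decide

theorem r₂_mul_of_norm_eq {g : ℤ[i]} (hg : g ≠ 0) {n m : ℕ} (hn : g.norm = n)
    (hdvd : ∀ z : ℤ[i], z.norm = n * m → g ∣ z) : r₂ (n * m) = r₂ m := by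
  rw [r₂, r₂, ← ncard_norm_eq_mul_and_dvd hg (m : ℤ), hn]
  congr 1
  ext z
  push_cast
  exact ⟨fun hz => ⟨hz, hdvd z hz⟩, And.left⟩

theorem r₂_two_mul (m : ℕ) : r₂ (2 * m) = r₂ m := by
  set g : ℤ[i] := ⟨1, 1⟩
  have hg : g.norm = (2 : ℕ) := by norm_num [g, norm_def]
  refine r₂_mul_of_norm_eq (by decide) hg fun z hz => ?_
  have hdvd : g ∣ (z.norm : ℤ[i]) :=
    ⟨star g * m, by rw [hz, ← mul_assoc, ← norm_eq_mul_conj, hg]; push_cast; ring⟩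
  -- `star g = g * (-i)`, so the two alternatives coincide
  exact (dvd_or_star_dvd_of_dvd_norm (prime_of_norm_eq_prime Nat.prime_two hg) hdvd).elim id
    fun h => dvd_trans ⟨⟨0, -1⟩, by decide⟩ h

theorem r₂_two_pow_mul (c m : ℕ) : r₂ (2 ^ c * m) = r₂ m := by
  induction c with
  | zero => simp
  | succ c ih => rw [pow_succ', mul_assoc, r₂_two_mul, ih]

theorem r₂_sq_mul_of_mod_four_eq_three {q : ℕ} (hq : q.Prime) (hq3 : q % 4 = 3) (m : ℕ) :
    r₂ (q ^ 2 * m) = r₂ m := by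
  refine r₂_mul_of_norm_eq (by exact_mod_cast hq.ne_zero) (by rw [norm_natCast]; push_cast; ring)
    fun z hz => natCast_dvd_of_dvd_norm hq hq3 ?_
  rw [hz]
  push_cast
  exact (dvd_pow_self _ two_ne_zero).mul_right _

theorem r₂_mul_eq_zero_of_mod_four_eq_three {q m : ℕ} (hq : q.Prime) (hq3 : q % 4 = 3)
    (hm : ¬ q ∣ m) : r₂ (q * m) = 0 := by
  rw [r₂, Set.ncard_eq_zero (finite_setOf_norm_eq _), Set.eq_empty_iff_forall_notMem]
  intro z (hz : z.norm = _)
  push_cast at hz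
  obtain ⟨w, rfl⟩ := natCast_dvd_of_dvd_norm hq hq3 (hz ▸ dvd_mul_right _ _)
  rw [Zsqrtd.norm_mul, norm_natCast, mul_assoc] at hz
  exact hm (by exact_mod_cast Dvd.intro _ (mul_left_cancel₀ (by exact_mod_cast hq.ne_zero) hz))

theorem r₂_pow_mul_of_mod_four_eq_three {q m : ℕ} (hq : q.Prime) (hq3 : q % 4 = 3)
    (hm : ¬ q ∣ m) (b : ℕ) : r₂ (q ^ b * m) = if Even b then r₂ m else 0 := by
  have heven (k n : ℕ) : r₂ (q ^ (2 * k) * n) = r₂ n := by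
    induction k with
    | zero => simp
    | succ k ih =>
      rw [mul_add_one, pow_add, mul_comm (q ^ (2 * k)), mul_assoc,
        r₂_sq_mul_of_mod_four_eq_three hq hq3, ih]
  obtain ⟨k, rfl | rfl⟩ := Nat.even_or_odd' b
  · simp [heven]
  · rw [if_neg (Nat.not_even_two_mul_add_one k), pow_succ, mul_assoc, heven,
      r₂_mul_eq_zero_of_mod_four_eq_three hq hq3 hm]

theorem r₂_pow_succ_mul {p m : ℕ} (hp : p.Prime) (hp2 : p ≠ 2) (hm : ¬ p ∣ m) {π : ℤ[i]}
    (hπ : π.norm = p) (a : ℕ) : r₂ (p ^ (a + 1) * m) = r₂ (p ^ a * m) + r₂ m := by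
  set S := {z : ℤ[i] | z.norm = (p ^ (a + 1) * m : ℕ)}
  have hπ0 : π ≠ 0 := (prime_of_norm_eq_prime hp hπ).ne_zero
  have hdvd : (S ∩ {z | π ∣ z}).ncard = r₂ (p ^ a * m) := by
    rw [r₂, ← ncard_norm_eq_mul_and_dvd hπ0, hπ]
    congr 1
    ext z
    simp only [S, Set.mem_inter_iff, Set.mem_ofPred_eq]
    push_cast
    rw [pow_succ, mul_comm _ (p : ℤ), mul_assoc]
  have hndvd : (S \ {z | π ∣ z}).ncard = r₂ m := by
    rw [r₂, ← ncard_norm_eq_mul_and_dvd (pow_ne_zero (a + 1) (star_ne_zero.2 hπ0)),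
      norm_star_pow, hπ]
    congr 1
    ext z
    simp only [S, Set.mem_sdiff, Set.mem_ofPred_eq]
    constructor
    · rintro ⟨hz, hπz⟩
      exact ⟨by rw [hz]; push_cast; rfl, (not_dvd_iff_star_pow_dvd hp hp2 hm hπ hz).1 hπz⟩
    · rintro ⟨hz, hπz⟩
      have hz : z.norm = (p ^ (a + 1) * m : ℕ) := by rw [hz]; push_cast; rfl
      exact ⟨hz, (not_dvd_iff_star_pow_dvd hp hp2 hm hπ hz).2 hπz⟩
  rw [← hdvd, ← hndvd]
  exact (Set.ncard_inter_add_ncard_sdiff_eq_ncard S _ (finite_setOf_norm_eq _)).symm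

theorem r₂_pow_mul_of_mod_four_eq_one {p m : ℕ} (hp : p.Prime) (hp1 : p % 4 = 1) (hm : ¬ p ∣ m)
    (a : ℕ) : r₂ (p ^ a * m) = (1 + a) * r₂ m := by
  have := Fact.mk hp
  obtain ⟨x, y, hxy⟩ := Nat.Prime.sq_add_sq (p := p) (by omega)
  have hπ : (⟨x, y⟩ : ℤ[i]).norm = p := by rw [norm_def, ← hxy]; push_cast; ring
  induction a with
  | zero => simp
  | succ a ih => rw [r₂_pow_succ_mul hp (by omega) hm hπ, ih]; ring

theorem r₂_prod_pow_mul_of_mod_four_eq_one {ι : Type*} {s : Finset ι} {p : ι → ℕ} (a : ι → ℕ)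
    (hp : ∀ i ∈ s, (p i).Prime ∧ p i % 4 = 1) (hinj : Set.InjOn p s) {m : ℕ}
    (hm : ∀ i ∈ s, (p i).Coprime m) :
    r₂ ((∏ i ∈ s, p i ^ a i) * m) = (∏ i ∈ s, (1 + a i)) * r₂ m := by
  induction s using Finset.cons_induction with
  | empty => simp
  | cons i s hi ih =>
    simp only [Finset.mem_cons, forall_eq_or_imp] at hp hm
    have hcop : (p i).Coprime ((∏ j ∈ s, p j ^ a j) * m) :=
      (Nat.Coprime.prod_pow_of_prime_ne hp.1.1 (fun j hj =>
        ⟨(hp.2 j hj).1, fun h => hi (hinj (by simp [hj]) (by simp) h ▸ hj)⟩) a).mul_right hm.1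
    rw [Finset.prod_cons, mul_assoc, r₂_pow_mul_of_mod_four_eq_one hp.1.1 hp.1.2
      ((Nat.Prime.coprime_iff_not_dvd hp.1.1).1 hcop), ih hp.2 (hinj.mono (by simp)) hm.2,
      Finset.prod_cons, mul_assoc]

theorem r₂_prod_pow_mul_of_mod_four_eq_three {ι : Type*} {s : Finset ι} {q : ι → ℕ} (b : ι → ℕ)
    (hq : ∀ j ∈ s, (q j).Prime ∧ q j % 4 = 3) (hinj : Set.InjOn q s) {m : ℕ}
    (hm : ∀ j ∈ s, (q j).Coprime m) :
    r₂ ((∏ j ∈ s, q j ^ b j) * m) = if ∀ j ∈ s, Even (b j) then r₂ m else 0 := by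
  induction s using Finset.cons_induction with
  | empty => simp
  | cons j s hj ih =>
    simp only [Finset.mem_cons, forall_eq_or_imp] at hq hm
    have hcop : (q j).Coprime ((∏ k ∈ s, q k ^ b k) * m) :=
      (Nat.Coprime.prod_pow_of_prime_ne hq.1.1 (fun k hk =>
        ⟨(hq.2 k hk).1, fun h => hj (hinj (by simp [hk]) (by simp) h ▸ hk)⟩) b).mul_right hm.1
    rw [Finset.prod_cons, mul_assoc, r₂_pow_mul_of_mod_four_eq_three hq.1.1 hq.1.2
      ((Nat.Prime.coprime_iff_not_dvd hq.1.1).1 hcop), ih hq.2 (hinj.mono (by simp)) hm.2]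
    simp only [Finset.forall_mem_cons, ite_and]

theorem stmt_3_general (n l c : ℕ) (p a : Fin n → ℕ) (q b : Fin l → ℕ)
    (hp : ∀ i, (p i).Prime ∧ p i % 4 = 1)
    (hq : ∀ j, (q j).Prime ∧ q j % 4 = 3)
    (hpinj : Function.Injective p) (hqinj : Function.Injective q)
    (lam : ℕ)
    (hfact : lam = (∏ i, p i ^ a i) * (∏ j, q j ^ b j) * 2 ^ c) :
    {z : ℤ × ℤ | z.1 ^ 2 + z.2 ^ 2 = (lam : ℤ)}.ncard =
      if ∀ j, Even (b j) then 4 * ∏ i, (1 + a i) else 0 := by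
  have hne {x y : ℕ} (h : x % 4 ≠ y % 4) : x ≠ y := ne_of_apply_ne (· % 4) h
  have hpc (i : Fin n) : (p i).Coprime ((∏ j, q j ^ b j) * 2 ^ c) :=
    (Nat.Coprime.prod_pow_of_prime_ne (hp i).1
      (fun j _ => ⟨(hq j).1, hne (by rw [(hp i).2, (hq j).2]; decide)⟩) b).mul_right
      (((Nat.coprime_primes (hp i).1 Nat.prime_two).2 (hne (by rw [(hp i).2]; decide))).pow_right c)
  have hqc (j : Fin l) : (q j).Coprime (2 ^ c) :=
    ((Nat.coprime_primes (hq j).1 Nat.prime_two).2 (hne (by rw [(hq j).2]; decide))).pow_right c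
  have h2 : r₂ (2 ^ c) = 4 := by rw [← mul_one (2 ^ c), r₂_two_pow_mul, r₂_one]
  rw [ncard_sq_add_sq_eq_r₂, hfact, mul_assoc,
    r₂_prod_pow_mul_of_mod_four_eq_one a (fun i _ => hp i) hpinj.injOn (fun i _ => hpc i),
    r₂_prod_pow_mul_of_mod_four_eq_three b (fun j _ => hq j) hqinj.injOn (fun j _ => hqc j), h2]
  simp only [Finset.mem_univ, forall_const]
  split_ifs <;> ring

theorem stmt_3 (n l c : ℕ) (p a : Fin n → ℕ) (q b : Fin l → ℕ)
    (hp : ∀ i, (p i).Prime ∧ p i % 4 = 1)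
    (hq : ∀ j, (q j).Prime ∧ q j % 4 = 3)
    (hpinj : Function.Injective p) (hqinj : Function.Injective q)
    (lam : ℕ) (hlam : 0 < lam)
    (hfact : lam = (∏ i, p i ^ a i) * (∏ j, q j ^ b j) * 2 ^ c) :
    {z : ℤ × ℤ | z.1 ^ 2 + z.2 ^ 2 = (lam : ℤ)}.ncard =
      if ∀ j, Even (b j) then 4 * ∏ i, (1 + a i) else 0 :=
  stmt_3_general n l c p a q b hp hq hpinj hqinj lam hfact
end

section
/- For every d ≥ 2 and every N > 0, there exists a nonzero function f ∈ L²(𝕋^d) and λ > 0 such that −Δf = λf and f vanishes to order at least N at 0. -/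
/-- Partial derivative in the `i`-th coordinate direction. -/
noncomputable def pderiv' (d : ℕ) (i : Fin d) (g : EuclideanSpace ℝ (Fin d) → ℂ) :
    EuclideanSpace ℝ (Fin d) → ℂ :=
  fun x => fderiv ℝ g x (EuclideanSpace.single i 1)

/-- The Laplacian as the sum of second coordinate partial derivatives. -/
noncomputable def laplacian' (d : ℕ) (g : EuclideanSpace ℝ (Fin d) → ℂ) :
    EuclideanSpace ℝ (Fin d) → ℂ :=
  fun x => ∑ i, pderiv' d i (pderiv' d i g) x

/-- `f` is `2π`-periodic in each coordinate, i.e. a function on the torus `𝕋^d`. -/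
def TorusPeriodic (d : ℕ) (f : EuclideanSpace ℝ (Fin d) → ℂ) : Prop :=
  ∀ (x : EuclideanSpace ℝ (Fin d)) (i : Fin d),
    f (x + (2 * Real.pi) • EuclideanSpace.single i 1) = f x

/-- `f` vanishes to order (at least) `N` at `0`:
`limsup_{δ → 0} δ^{-N} sup_{‖x‖ ≤ δ} |f x| < ∞`. -/
def VanishesToOrder (d : ℕ) (f : EuclideanSpace ℝ (Fin d) → ℂ) (N : ℝ) : Prop :=
  ∃ C : ℝ, ∀ᶠ δ in nhdsWithin (0 : ℝ) (Set.Ioi 0),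
    ∀ x : EuclideanSpace ℝ (Fin d), ‖x‖ ≤ δ → ‖f x‖ ≤ C * δ ^ N

namespace Stmt8Aux

open Complex Finset

/-! ### Gaussian integer lattice points on a circle -/

def zp : GaussianInt := ⟨2, 1⟩
def zm : GaussianInt := ⟨2, -1⟩

lemma mod5 (m : ℕ) (hm : 1 ≤ m) :
    (((zp ^ m).re : ZMod 5) = 2 ∧ ((zp ^ m).im : ZMod 5) = 1) ∨
    (((zp ^ m).re : ZMod 5) = 3 ∧ ((zp ^ m).im : ZMod 5) = 4) := by
  induction m with
  | zero => omega
  | succ k ih =>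
    rcases Nat.eq_zero_or_pos k with hk | hk
    · subst hk; left; constructor <;> norm_num [zp]
    · have ih := ih hk
      rw [pow_succ]
      have hre : (zp ^ k * zp).re = (zp ^ k).re * 2 - (zp ^ k).im := by
        rw [Zsqrtd.re_mul]; show _ = _ ; norm_num [zp]; ring
      have him : (zp ^ k * zp).im = (zp ^ k).re + (zp ^ k).im * 2 := by
        rw [Zsqrtd.im_mul]; norm_num [zp]
      rw [hre, him]
      push_cast
      rcases ih with ⟨h1, h2⟩ | ⟨h1, h2⟩ <;> rw [h1, h2] <;> [right; left] <;>
        constructor <;> decide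

lemma zp_ne_zero : zp ≠ 0 := by
  intro h
  have := congrArg Zsqrtd.re h
  norm_num [zp] at this

lemma zm_ne_zero : zm ≠ 0 := by
  intro h
  have := congrArg Zsqrtd.re h
  norm_num [zm] at this

lemma zpow_ne (m : ℕ) (hm : 1 ≤ m) : zp ^ m ≠ zm ^ m := by
  intro h
  have hst : zm ^ m = star (zp ^ m) := by
    rw [show zm = star zp from rfl, ← star_pow]
  have him : (zp ^ m).im = -(zp ^ m).im := by
    conv_lhs => rw [h, hst, Zsqrtd.im_star]
  have h0 : (zp ^ m).im = 0 := by omega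
  rcases mod5 m hm with ⟨_, h2⟩ | ⟨_, h2⟩ <;> rw [h0] at h2 <;>
    exact absurd h2 (by decide)

lemma gz_injective (n : ℕ) : ∀ j j', j ≤ n → j' ≤ n →
    zp ^ j * zm ^ (n - j) = zp ^ j' * zm ^ (n - j') → j = j' := by
  suffices H : ∀ j j', j' ≤ j → j ≤ n → j' ≤ n →
      zp ^ j * zm ^ (n - j) = zp ^ j' * zm ^ (n - j') → j = j' by
    intro j j' h1 h2 heq
    rcases le_total j' j with h | h
    · exact H j j' h h1 h2 heq
    · exact (H j' j h h2 h1 heq.symm).symm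
  intro j j' hle hj hj' heq
  by_contra hne
  have hm1 : 1 ≤ j - j' := by omega
  have hz1 : zp ^ j = zp ^ j' * zp ^ (j - j') := by rw [← pow_add]; congr 1; omega
  have hz2 : zm ^ (n - j') = zm ^ (j - j') * zm ^ (n - j) := by rw [← pow_add]; congr 1; omega
  rw [hz1, hz2] at heq
  have h2 : zp ^ j' * (zp ^ (j - j') * zm ^ (n - j)) =
      zp ^ j' * (zm ^ (j - j') * zm ^ (n - j)) := by
    rw [← mul_assoc]; exact heq
  have h3 := mul_left_cancel₀ (pow_ne_zero j' zp_ne_zero) h2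
  have h4 := mul_right_cancel₀ (pow_ne_zero (n - j) zm_ne_zero) h3
  exact zpow_ne (j - j') hm1 h4

lemma norm_eq_sq (z : GaussianInt) : Zsqrtd.norm z = z.re ^ 2 + z.im ^ 2 := by
  rw [Zsqrtd.norm]; ring

lemma sq_add_sq (n j : ℕ) (hj : j ≤ n) :
    (zp ^ j * zm ^ (n - j)).re ^ 2 + (zp ^ j * zm ^ (n - j)).im ^ 2 = 5 ^ n := by
  rw [← norm_eq_sq, Zsqrtd.norm_mul]
  have hp : ∀ (w : GaussianInt) (m : ℕ), Zsqrtd.norm w = 5 → Zsqrtd.norm (w ^ m) = 5 ^ m := by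
    intro w m hw
    induction m with
    | zero => simp [Zsqrtd.norm]
    | succ k ihk => rw [pow_succ, pow_succ, Zsqrtd.norm_mul, ihk, hw]
  have h1 : Zsqrtd.norm (zp ^ j) = 5 ^ j := hp _ _ (by norm_num [Zsqrtd.norm, zp])
  have h2 : Zsqrtd.norm (zm ^ (n - j)) = 5 ^ (n - j) := hp _ _ (by norm_num [Zsqrtd.norm, zm])
  rw [h1, h2, ← pow_add]
  congr 1
  omega

/-! ### Trigonometric sums and their derivatives -/

noncomputable def phL (d : ℕ) (c : Fin d → ℤ) : EuclideanSpace ℝ (Fin d) →L[ℝ] ℝ :=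
  LinearMap.toContinuousLinearMap
    { toFun := fun x => ∑ i, (c i : ℝ) * x i
      map_add' := fun x y => by
        simp only [PiLp.add_apply, mul_add]
        rw [Finset.sum_add_distrib]
      map_smul' := fun r x => by
        simp only [PiLp.smul_apply, smul_eq_mul, RingHom.id_apply]
        rw [Finset.mul_sum]
        exact Finset.sum_congr rfl fun i _ => by ring }

lemma phL_apply (d : ℕ) (c : Fin d → ℤ) (x : EuclideanSpace ℝ (Fin d)) :
    phL d c x = ∑ i, (c i : ℝ) * x i := rfl

lemma phL_single (d : ℕ) (c : Fin d → ℤ) (i : Fin d) :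
    phL d c (EuclideanSpace.single i (1 : ℝ)) = c i := by
  rw [phL_apply]
  simp only [EuclideanSpace.single_apply, mul_ite, mul_one, mul_zero]
  rw [Finset.sum_ite_eq' Finset.univ i (fun i' => (c i' : ℝ))]
  simp

noncomputable def gfun (d : ℕ) (c : Fin d → ℤ) : EuclideanSpace ℝ (Fin d) → ℂ :=
  fun x => Complex.exp (Complex.I * (phL d c x : ℂ))

lemma hasFDerivAt_gfun (d : ℕ) (c : Fin d → ℤ) (x : EuclideanSpace ℝ (Fin d)) :
    HasFDerivAt (gfun d c) (Complex.exp (Complex.I * (phL d c x : ℂ)) •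
      (Complex.I • (Complex.ofRealCLM.comp (phL d c)))) x := by
  have h1 : HasFDerivAt (fun y : EuclideanSpace ℝ (Fin d) => (Complex.I * ((phL d c y : ℝ) : ℂ)))
      (Complex.I • (Complex.ofRealCLM.comp (phL d c))) x :=
    ((Complex.ofRealCLM.comp (phL d c)).hasFDerivAt (x := x)).const_mul Complex.I
  exact (Complex.hasDerivAt_exp _).comp_hasFDerivAt x h1

noncomputable def Ffun (d n : ℕ) (k : Fin (n+1) → Fin d → ℤ) (ν : Fin (n+1) → ℂ) :
    EuclideanSpace ℝ (Fin d) → ℂ :=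
  fun x => ∑ j, ν j * gfun d (k j) x

lemma hasFDerivAt_Ffun (d n : ℕ) (k : Fin (n+1) → Fin d → ℤ) (ν : Fin (n+1) → ℂ)
    (x : EuclideanSpace ℝ (Fin d)) :
    HasFDerivAt (Ffun d n k ν)
      (∑ j, ν j • (Complex.exp (Complex.I * (phL d (k j) x : ℂ)) •
        (Complex.I • (Complex.ofRealCLM.comp (phL d (k j)))))) x :=
  HasFDerivAt.fun_sum (fun j _ => (hasFDerivAt_gfun d (k j) x).const_mul (ν j))

lemma pderiv_Ffun (d n : ℕ) (k : Fin (n+1) → Fin d → ℤ) (ν : Fin (n+1) → ℂ) (i : Fin d) :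
    pderiv' d i (Ffun d n k ν) = Ffun d n k (fun j => ν j * (Complex.I * ((k j i : ℤ) : ℂ))) := by
  funext x
  show fderiv ℝ _ x (EuclideanSpace.single i 1) = _
  rw [(hasFDerivAt_Ffun d n k ν x).fderiv]
  simp only [ContinuousLinearMap.sum_apply, ContinuousLinearMap.smul_apply,
    ContinuousLinearMap.comp_apply, Complex.ofRealCLM_apply, phL_single]
  unfold Ffun gfun
  refine Finset.sum_congr rfl fun j _ => ?_
  simp only [smul_eq_mul]
  push_cast
  ring

lemma lap_Ffun (d n : ℕ) (k : Fin (n+1) → Fin d → ℤ) (ν : Fin (n+1) → ℂ) :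
    laplacian' d (Ffun d n k ν) =
      Ffun d n k (fun j => ν j * (-(∑ i, ((k j i : ℤ) : ℂ) ^ 2))) := by
  funext x
  show ∑ i, pderiv' d i (pderiv' d i (Ffun d n k ν)) x = _
  have h : ∀ i : Fin d, pderiv' d i (pderiv' d i (Ffun d n k ν))
      = Ffun d n k (fun j => ν j * (Complex.I * ((k j i : ℤ) : ℂ))
          * (Complex.I * ((k j i : ℤ) : ℂ))) := by
    intro i
    rw [pderiv_Ffun, pderiv_Ffun]
  calc ∑ i, pderiv' d i (pderiv' d i (Ffun d n k ν)) x
      = ∑ i, Ffun d n k (fun j => ν j * (Complex.I * ((k j i : ℤ) : ℂ))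
          * (Complex.I * ((k j i : ℤ) : ℂ))) x :=
        Finset.sum_congr rfl fun i _ => by rw [h i]
    _ = _ := by
        unfold Ffun
        rw [Finset.sum_comm]
        refine Finset.sum_congr rfl fun j _ => ?_
        beta_reduce
        rw [← Finset.sum_mul]
        congr 1
        have hz : ∀ z : ℂ, Complex.I * z * (Complex.I * z) = -(z ^ 2) := by
          intro z
          rw [mul_mul_mul_comm, Complex.I_mul_I]
          ring
        calc ∑ i, ν j * (Complex.I * ((k j i : ℤ) : ℂ)) * (Complex.I * ((k j i : ℤ) : ℂ))
            = ∑ i, ν j * -(((k j i : ℤ) : ℂ) ^ 2) := by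
              refine Finset.sum_congr rfl fun i _ => ?_
              rw [mul_assoc, hz]
          _ = ν j * -(∑ i, ((k j i : ℤ) : ℂ) ^ 2) := by
              rw [← Finset.mul_sum, ← Finset.sum_neg_distrib]

lemma contDiff_Ffun (d n : ℕ) (k : Fin (n+1) → Fin d → ℤ) (ν : Fin (n+1) → ℂ) :
    ContDiff ℝ (⊤ : ℕ∞) (Ffun d n k ν) := by
  refine ContDiff.sum fun j _ => ContDiff.mul contDiff_const ?_
  have h0 : ContDiff ℝ (⊤ : ℕ∞) (fun x : EuclideanSpace ℝ (Fin d) => ((phL d (k j) x : ℝ) : ℂ)) :=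
    (Complex.ofRealCLM.comp (phL d (k j))).contDiff
  have h1 : ContDiff ℝ (⊤ : ℕ∞) (fun x : EuclideanSpace ℝ (Fin d) =>
      Complex.I * ((phL d (k j) x : ℝ) : ℂ)) :=
    contDiff_const.mul h0
  have h2 : ContDiff ℝ (⊤ : ℕ∞) Complex.exp := Complex.contDiff_exp
  exact h2.comp h1

lemma gfun_periodic (d : ℕ) (c : Fin d → ℤ) (x : EuclideanSpace ℝ (Fin d)) (i : Fin d) :
    gfun d c (x + (2 * Real.pi) • EuclideanSpace.single i 1) = gfun d c x := by
  unfold gfun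
  rw [map_add, map_smul]
  rw [smul_eq_mul, phL_single]
  push_cast
  rw [mul_add, Complex.exp_add]
  have : Complex.I * (2 * (Real.pi : ℂ) * (c i : ℂ)) = (c i : ℂ) * (2 * Real.pi * Complex.I) := by
    ring
  rw [this]
  rw [show ((c i : ℂ) * (2 * (Real.pi:ℂ) * Complex.I))
      = ((c i : ℤ) : ℂ) * (2 * Real.pi * Complex.I) by norm_num]
  rw [Complex.exp_int_mul_two_pi_mul_I]
  ring

/-! ### Characters -/

/-- `gfun` as a monoid hom on the multiplicative version of the additive group. -/
noncomputable def chi (d : ℕ) (c : Fin d → ℤ) :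
    Multiplicative (EuclideanSpace ℝ (Fin d)) →* ℂ where
  toFun := fun x => gfun d c (Multiplicative.toAdd x)
  map_one' := by
    show gfun d c (Multiplicative.toAdd (1 : Multiplicative (EuclideanSpace ℝ (Fin d)))) = 1
    rw [toAdd_one]
    unfold gfun
    simp
  map_mul' := by
    intro x y
    show gfun d c (Multiplicative.toAdd (x * y)) = gfun d c _ * gfun d c _
    rw [toAdd_mul]
    unfold gfun
    rw [map_add]
    push_cast
    rw [mul_add, Complex.exp_add]

lemma gfun_eq_imp (d : ℕ) (c c' : Fin d → ℤ)
    (h : ∀ x, gfun d c x = gfun d c' x) (i : Fin d) : c i = c' i := by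
  by_contra hne
  set m : ℤ := c i - c' i with hm
  have hm0 : m ≠ 0 := fun h0 => hne (by omega)
  set t : ℝ := Real.pi / (2 * m) with ht
  have hx := h (t • EuclideanSpace.single i 1)
  unfold gfun at hx
  rw [map_smul, map_smul, smul_eq_mul, smul_eq_mul, phL_single, phL_single] at hx
  rw [Complex.exp_eq_exp_iff_exists_int] at hx
  obtain ⟨z, hz⟩ := hx
  push_cast at hz
  have h2 : ((t * (c i) - t * (c' i) - (z : ℝ) * (2 * Real.pi) : ℝ) : ℂ) * Complex.I = 0 := by
    push_cast
    linear_combination hz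
  rcases mul_eq_zero.mp h2 with h3 | h3
  · have h4 : t * (c i) - t * (c' i) - (z : ℝ) * (2 * Real.pi) = 0 := by exact_mod_cast h3
    have hmr : (m : ℝ) ≠ 0 := Int.cast_ne_zero.mpr hm0
    have h5 : t * m = (z : ℝ) * (2 * Real.pi) := by
      have : (m : ℝ) = (c i : ℝ) - (c' i : ℝ) := by push_cast [hm]; ring
      rw [this]; linarith [h4]
    have h6 : Real.pi / 2 = (z : ℝ) * (2 * Real.pi) := by
      rw [← h5, ht]; field_simp
    have hpi := Real.pi_ne_zero
    have h9 : Real.pi * (4 * (z:ℝ) - 1) = 0 := by linear_combination -2 * h6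
    rcases mul_eq_zero.mp h9 with h | h
    · exact hpi h
    · have h10 : (4:ℝ) * (z:ℝ) = 1 := by linarith
      have : (4 : ℤ) * z = 1 := by exact_mod_cast h10
      omega
  · exact Complex.I_ne_zero h3

lemma sum_ite_pair {d : ℕ} {i0 i1 : Fin d} (h : i0 ≠ i1) {R : Type*} [AddCommMonoid R]
    (F : Fin d → R) (hF : ∀ i, i ≠ i0 → i ≠ i1 → F i = 0) :
    ∑ i, F i = F i0 + F i1 := by
  classical
  rw [← Finset.sum_subset (Finset.subset_univ ({i0, i1} : Finset (Fin d)))]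
  · rw [Finset.sum_pair h]
  · intro i _ hi
    simp only [Finset.mem_insert, Finset.mem_singleton] at hi
    push_neg at hi
    exact hF i hi.1 hi.2

lemma coord_le_norm {d : ℕ} (x : EuclideanSpace ℝ (Fin d)) (i : Fin d) : |x i| ≤ ‖x‖ := by
  rw [EuclideanSpace.norm_eq]
  have h1 : |x i| = Real.sqrt (‖x i‖ ^ 2) := by
    rw [Real.norm_eq_abs, Real.sqrt_sq_eq_abs]
    exact (_root_.abs_abs (x i)).symm
  rw [h1]
  apply Real.sqrt_le_sqrt
  exact Finset.single_le_sum (f := fun i => ‖x i‖ ^ 2) (fun i _ => sq_nonneg _) (Finset.mem_univ i)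

end Stmt8Aux

set_option maxHeartbeats 1000000 in
open Complex Finset in
theorem stmt_8 (d : ℕ) (hd : 2 ≤ d) (N : ℝ) (hN : 0 < N) :
    ∃ (f : EuclideanSpace ℝ (Fin d) → ℂ) (lam : ℝ), 0 < lam ∧
      ContDiff ℝ (⊤ : ℕ∞) f ∧ TorusPeriodic d f ∧ f ≠ 0 ∧
      (∀ x, -laplacian' d f x = lam * f x) ∧ VanishesToOrder d f N := by
  classical
  obtain ⟨M, hMdef⟩ : ∃ M : ℕ, M = ⌈N⌉₊ := ⟨_, rfl⟩
  have hM0 : 0 < M := hMdef ▸ Nat.ceil_pos.mpr hN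
  have hNM : N ≤ (M : ℝ) := hMdef ▸ Nat.le_ceil N
  obtain ⟨n, hndef⟩ : ∃ n : ℕ, n = M * M + 1 := ⟨_, rfl⟩
  set i0 : Fin d := ⟨0, by omega⟩ with hi0
  set i1 : Fin d := ⟨1, by omega⟩ with hi1
  have hi01 : i0 ≠ i1 := by simp [hi0, hi1, Fin.ext_iff]
  set A : Fin (n+1) → ℤ :=
    fun j => (Stmt8Aux.zp ^ (j:ℕ) * Stmt8Aux.zm ^ (n - (j:ℕ))).re with hA
  set B : Fin (n+1) → ℤ :=
    fun j => (Stmt8Aux.zp ^ (j:ℕ) * Stmt8Aux.zm ^ (n - (j:ℕ))).im with hB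
  have hjn : ∀ j : Fin (n+1), (j:ℕ) ≤ n := fun j => Nat.lt_succ_iff.mp j.isLt
  have hAB : ∀ j, A j ^ 2 + B j ^ 2 = 5 ^ n := fun j => Stmt8Aux.sq_add_sq n j (hjn j)
  have hABinj : ∀ j j' : Fin (n+1), A j = A j' → B j = B j' → j = j' := by
    intro j j' h1 h2
    refine Fin.ext (Stmt8Aux.gz_injective n j j' (hjn j) (hjn j') ?_)
    exact Zsqrtd.ext h1 h2
  set kZ : Fin (n+1) → Fin d → ℤ :=
    fun j i => if i = i0 then A j else if i = i1 then B j else 0 with hkZ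
  have hkZ0 : ∀ j, kZ j i0 = A j := fun j => by simp [hkZ]
  have hkZ1 : ∀ j, kZ j i1 = B j := fun j => by
    simp only [hkZ]
    rw [if_neg (Ne.symm hi01)]
    simp
  -- nontrivial kernel of the Taylor-coefficient map
  set L : (Fin (n+1) → ℂ) →ₗ[ℂ] ((Fin M × Fin M) → ℂ) :=
    { toFun := fun ν pq => ∑ j, ν j * ((A j : ℂ) ^ (pq.1 : ℕ) * (B j : ℂ) ^ (pq.2 : ℕ))
      map_add' := by
        intro ν ν'
        funext pq
        simp only [Pi.add_apply, add_mul]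
        rw [Finset.sum_add_distrib]
      map_smul' := by
        intro c ν
        funext pq
        simp only [Pi.smul_apply, smul_eq_mul, RingHom.id_apply]
        rw [Finset.mul_sum]
        exact Finset.sum_congr rfl fun j _ => by ring } with hL
  obtain ⟨ν, hν0, hνker⟩ : ∃ ν : Fin (n+1) → ℂ, ν ≠ 0 ∧ L ν = 0 := by
    by_contra hc
    push_neg at hc
    have hinj : Function.Injective L := by
      rw [← LinearMap.ker_eq_bot, Submodule.eq_bot_iff]
      intro ν hν
      by_contra h0
      exact (hc ν h0) hν
    have hle := LinearMap.finrank_le_finrank_of_injective hinj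
    have e1 : Module.finrank ℂ (Fin (n+1) → ℂ) = n + 1 := by
      simp [Module.finrank_pi]
    have e2 : Module.finrank ℂ ((Fin M × Fin M) → ℂ) = M * M := by
      simp [Module.finrank_pi]
    rw [e1, e2] at hle
    omega
  have hcond : ∀ p q : ℕ, p < M → q < M →
      ∑ j, ν j * ((A j : ℂ) ^ p * (B j : ℂ) ^ q) = 0 := by
    intro p q hp hq
    have := congrFun hνker (⟨p, hp⟩, ⟨q, hq⟩)
    simpa [hL] using this
  refine ⟨Stmt8Aux.Ffun d n kZ ν, (5:ℝ)^n, by positivity,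
    Stmt8Aux.contDiff_Ffun d n kZ ν, ?_, ?_, ?_, ?_⟩
  · -- periodicity
    intro x i
    unfold Stmt8Aux.Ffun
    exact Finset.sum_congr rfl fun j _ => by rw [Stmt8Aux.gfun_periodic]
  · -- nonvanishing
    intro hf0
    have hLI : LinearIndependent ℂ (fun j : Fin (n+1) => ⇑(Stmt8Aux.chi d (kZ j))) := by
      refine (linearIndependent_monoidHom (Multiplicative (EuclideanSpace ℝ (Fin d))) ℂ).comp
        (fun j => Stmt8Aux.chi d (kZ j)) ?_
      intro j j' hjj
      have hg : ∀ x, Stmt8Aux.gfun d (kZ j) x = Stmt8Aux.gfun d (kZ j') x := by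
        intro x
        exact DFunLike.congr_fun hjj (Multiplicative.ofAdd x)
      have hA' := Stmt8Aux.gfun_eq_imp d _ _ hg i0
      have hB' := Stmt8Aux.gfun_eq_imp d _ _ hg i1
      rw [hkZ0, hkZ0] at hA'
      rw [hkZ1, hkZ1] at hB'
      exact hABinj j j' hA' hB'
    have hall := Fintype.linearIndependent_iff.mp hLI ν ?_
    · exact hν0 (funext fun j => hall j)
    · funext x
      have h1 := congrFun hf0 (Multiplicative.toAdd x)
      simp only [Pi.zero_apply] at h1
      simp only [Finset.sum_apply, Pi.smul_apply, smul_eq_mul, Pi.zero_apply]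
      exact h1
  · -- eigenfunction equation
    intro x
    rw [Stmt8Aux.lap_Ffun]
    have hsum : ∀ j, ∑ i, ((kZ j i : ℤ) : ℂ) ^ 2 = ((5:ℂ)) ^ n := by
      intro j
      rw [Stmt8Aux.sum_ite_pair hi01 (fun i => ((kZ j i : ℤ) : ℂ) ^ 2) ?_]
      · rw [hkZ0 j, hkZ1 j]
        have := hAB j
        exact_mod_cast this
      · intro i h1 h2
        show ((kZ j i : ℤ) : ℂ) ^ 2 = 0
        have hz : kZ j i = 0 := by simp only [hkZ]; rw [if_neg h1, if_neg h2]
        rw [hz]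
        norm_num
    unfold Stmt8Aux.Ffun
    rw [← Finset.sum_neg_distrib, Finset.mul_sum]
    refine Finset.sum_congr rfl fun j _ => ?_
    beta_reduce
    rw [hsum j]
    push_cast
    ring
  · -- vanishing to order N
    set Kc : ℝ := (∑ j, (|(A j : ℝ)| + |(B j : ℝ)|)) + 1 with hKc
    have hKpos : 0 < Kc := by positivity
    have hKc1 : ∀ j : Fin (n+1), |(A j:ℝ)| + |(B j:ℝ)| ≤ Kc := by
      intro j
      have h1 : |(A j:ℝ)| + |(B j:ℝ)| ≤ ∑ j', (|(A j':ℝ)| + |(B j':ℝ)|) :=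
        Finset.single_le_sum (f := fun j' => |(A j':ℝ)| + |(B j':ℝ)|)
          (fun j' _ => by positivity) (Finset.mem_univ j)
      rw [hKc]
      linarith
    set cM : ℝ := ((M.succ : ℕ) : ℝ) * (((M.factorial : ℕ) : ℝ) * (M : ℝ))⁻¹ with hcM
    have hcM0 : 0 ≤ cM := by positivity
    set C : ℝ := (∑ j, ‖ν j‖) * (Kc ^ M * cM) with hC
    have hC0 : 0 ≤ C := by
      apply mul_nonneg
      · exact Finset.sum_nonneg fun j _ => norm_nonneg _
      · positivity
    refine ⟨C, ?_⟩
    have hmem : Set.Ioo (0:ℝ) (min 1 Kc⁻¹) ∈ nhdsWithin (0:ℝ) (Set.Ioi 0) :=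
      Ioo_mem_nhdsGT_of_mem ⟨le_refl 0, by positivity⟩
    filter_upwards [hmem] with δ hδ x hx
    obtain ⟨hδ0, hδlt⟩ := hδ
    have hδ1 : δ ≤ 1 := le_of_lt (lt_of_lt_of_le hδlt (min_le_left _ _))
    have hδK : Kc * δ ≤ 1 := by
      have h2 : δ ≤ Kc⁻¹ := le_of_lt (lt_of_lt_of_le hδlt (min_le_right _ _))
      calc Kc * δ ≤ Kc * Kc⁻¹ := mul_le_mul_of_nonneg_left h2 (le_of_lt hKpos)
        _ = 1 := mul_inv_cancel₀ (ne_of_gt hKpos)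
    have hco : ∀ i, |x i| ≤ δ := fun i => le_trans (Stmt8Aux.coord_le_norm x i) hx
    set t : Fin (n+1) → ℝ := fun j => Stmt8Aux.phL d (kZ j) x with hT
    have hphx : ∀ j, t j = (A j : ℝ) * x i0 + (B j : ℝ) * x i1 := by
      intro j
      rw [hT]
      beta_reduce
      rw [Stmt8Aux.phL_apply]
      rw [Stmt8Aux.sum_ite_pair hi01 (fun i => ((kZ j i : ℤ) : ℝ) * x i) ?_]
      · rw [hkZ0 j, hkZ1 j]
      · intro i h1 h2
        show ((kZ j i : ℤ) : ℝ) * x i = 0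
        have hz : kZ j i = 0 := by simp only [hkZ]; rw [if_neg h1, if_neg h2]
        rw [hz]
        norm_num
    have htb : ∀ j, |t j| ≤ Kc * δ := by
      intro j
      rw [hphx j]
      calc |(A j:ℝ) * x i0 + (B j:ℝ) * x i1|
          ≤ |(A j:ℝ)| * |x i0| + |(B j:ℝ)| * |x i1| := by
            refine le_trans (abs_add_le _ _) ?_
            rw [abs_mul, abs_mul]
        _ ≤ |(A j:ℝ)| * δ + |(B j:ℝ)| * δ := by
            have h1 := hco i0
            have h2 := hco i1
            have := abs_nonneg ((A j : ℝ))
            have := abs_nonneg ((B j : ℝ))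
            have := abs_nonneg (x i0)
            have := abs_nonneg (x i1)
            nlinarith
        _ = (|(A j:ℝ)| + |(B j:ℝ)|) * δ := by ring
        _ ≤ Kc * δ := mul_le_mul_of_nonneg_right (hKc1 j) (le_of_lt hδ0)
    have hTay : ∀ m : ℕ, m < M → ∑ j, ν j * (Complex.I * ((t j : ℝ) : ℂ)) ^ m = 0 := by
      intro m hm
      have hsplit : ∀ j : Fin (n+1), ν j * (Complex.I * ((t j:ℝ):ℂ)) ^ m
          = ∑ p ∈ Finset.range (m+1),
            (Complex.I ^ m * (((x i0 : ℝ):ℂ) ^ p * ((x i1 : ℝ):ℂ) ^ (m - p) * (m.choose p : ℂ)))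
              * (ν j * ((A j : ℂ) ^ p * (B j : ℂ) ^ (m - p))) := by
        intro j
        rw [mul_pow]
        rw [show ((t j : ℝ):ℂ) = (A j:ℂ) * ((x i0:ℝ):ℂ) + (B j:ℂ) * ((x i1:ℝ):ℂ) from by
          rw [hphx j]; push_cast; ring]
        rw [add_pow, Finset.mul_sum, Finset.mul_sum]
        refine Finset.sum_congr rfl fun p hp => ?_
        rw [mul_pow, mul_pow]
        ring
      calc (∑ j, ν j * (Complex.I * ((t j:ℝ):ℂ)) ^ m)
          = ∑ j, ∑ p ∈ Finset.range (m+1),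
            (Complex.I ^ m * (((x i0 : ℝ):ℂ) ^ p * ((x i1 : ℝ):ℂ) ^ (m - p) * (m.choose p : ℂ)))
              * (ν j * ((A j : ℂ) ^ p * (B j : ℂ) ^ (m - p))) :=
            Finset.sum_congr rfl fun j _ => hsplit j
        _ = ∑ p ∈ Finset.range (m+1), ∑ j,
            (Complex.I ^ m * (((x i0 : ℝ):ℂ) ^ p * ((x i1 : ℝ):ℂ) ^ (m - p) * (m.choose p : ℂ)))
              * (ν j * ((A j : ℂ) ^ p * (B j : ℂ) ^ (m - p))) := Finset.sum_comm
        _ = 0 := by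
            refine Finset.sum_eq_zero fun p hp => ?_
            rw [← Finset.mul_sum]
            have hpM : p < M := lt_of_le_of_lt (Nat.lt_succ_iff.mp (Finset.mem_range.mp hp)) hm
            have hqM : m - p < M := lt_of_le_of_lt (Nat.sub_le m p) hm
            rw [hcond p (m - p) hpM hqM, mul_zero]
    have hkey : Stmt8Aux.Ffun d n kZ ν x
        = ∑ j, ν j * (Complex.exp (Complex.I * ((t j:ℝ):ℂ))
            - ∑ m ∈ Finset.range M, (Complex.I * ((t j:ℝ):ℂ)) ^ m / (m.factorial : ℂ)) := by
      have h1 : ∑ j, ν j * (Complex.exp (Complex.I * ((t j:ℝ):ℂ))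
            - ∑ m ∈ Finset.range M, (Complex.I * ((t j:ℝ):ℂ)) ^ m / (m.factorial : ℂ))
          = ∑ j, ν j * Complex.exp (Complex.I * ((t j:ℝ):ℂ))
            - ∑ j, ν j * ∑ m ∈ Finset.range M, (Complex.I * ((t j:ℝ):ℂ)) ^ m / (m.factorial : ℂ) := by
        rw [← Finset.sum_sub_distrib]
        exact Finset.sum_congr rfl fun j _ => by ring
      rw [h1]
      have h2 : ∑ j, ν j * ∑ m ∈ Finset.range M,
          (Complex.I * ((t j:ℝ):ℂ)) ^ m / (m.factorial : ℂ) = 0 := by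
        calc ∑ j, ν j * ∑ m ∈ Finset.range M, (Complex.I * ((t j:ℝ):ℂ)) ^ m / (m.factorial : ℂ)
            = ∑ j, ∑ m ∈ Finset.range M,
              (ν j * (Complex.I * ((t j:ℝ):ℂ)) ^ m) * ((m.factorial : ℂ))⁻¹ := by
              refine Finset.sum_congr rfl fun j _ => ?_
              rw [Finset.mul_sum]
              exact Finset.sum_congr rfl fun m _ => by rw [div_eq_mul_inv]; ring
          _ = ∑ m ∈ Finset.range M, (∑ j, ν j * (Complex.I * ((t j:ℝ):ℂ)) ^ m)
              * ((m.factorial : ℂ))⁻¹ := by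
              rw [Finset.sum_comm]
              exact Finset.sum_congr rfl fun m _ => by rw [Finset.sum_mul]
          _ = 0 := Finset.sum_eq_zero fun m hm => by
              rw [hTay m (Finset.mem_range.mp hm), zero_mul]
      rw [h2, sub_zero]
      rfl
    rw [hkey]
    calc ‖∑ j, ν j * (Complex.exp (Complex.I * ((t j:ℝ):ℂ))
            - ∑ m ∈ Finset.range M, (Complex.I * ((t j:ℝ):ℂ)) ^ m / (m.factorial : ℂ))‖
        ≤ ∑ j, ‖ν j * (Complex.exp (Complex.I * ((t j:ℝ):ℂ))
            - ∑ m ∈ Finset.range M, (Complex.I * ((t j:ℝ):ℂ)) ^ m / (m.factorial : ℂ))‖ :=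
          norm_sum_le _ _
      _ ≤ ∑ j, ‖ν j‖ * (Kc ^ M * cM * δ ^ M) := by
          refine Finset.sum_le_sum fun j _ => ?_
          rw [norm_mul]
          refine mul_le_mul_of_nonneg_left ?_ (norm_nonneg _)
          have hz1 : ‖Complex.I * ((t j:ℝ):ℂ)‖ ≤ 1 := by
            rw [norm_mul, Complex.norm_I, one_mul, Complex.norm_real, Real.norm_eq_abs]
            exact le_trans (htb j) hδK
          have hb := Complex.exp_bound hz1 hM0
          refine le_trans hb ?_
          have habs : ‖Complex.I * ((t j:ℝ):ℂ)‖ = |t j| := by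
            rw [norm_mul, Complex.norm_I, one_mul, Complex.norm_real, Real.norm_eq_abs]
          rw [habs]
          have h1 : |t j| ^ M ≤ (Kc * δ) ^ M :=
            pow_le_pow_left₀ (abs_nonneg _) (htb j) M
          have h2 : ((M.succ : ℝ) * ((M.factorial : ℝ) * (M:ℝ))⁻¹) = cM := by
            rw [hcM]
          calc |t j| ^ M * ((M.succ : ℝ) * ((M.factorial : ℝ) * (M:ℝ))⁻¹)
              ≤ (Kc * δ) ^ M * ((M.succ : ℝ) * ((M.factorial : ℝ) * (M:ℝ))⁻¹) := by
                refine mul_le_mul_of_nonneg_right h1 ?_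
                positivity
            _ = Kc ^ M * cM * δ ^ M := by rw [h2, mul_pow]; ring
      _ = C * δ ^ M := by
          rw [hC, ← Finset.sum_mul]
          ring
      _ ≤ C * δ ^ N := by
          have hmn : δ ^ M ≤ δ ^ N := by
            rw [← Real.rpow_natCast δ M]
            exact Real.rpow_le_rpow_of_exponent_ge hδ0 hδ1 hNM
          exact mul_le_mul_of_nonneg_left hmn hC0
end

section
/- For every N > 0 there exist λ ∈ ℕ, a finite set I = {k ∈ ℤ² : k₁² + k₂² = λ}, and complex coefficients (μ_k)_{k∈I} not all zero, such that the trigonometric polynomial f(x) = ∑_{k∈I} μ_k e^{i k·x} on ℝ² has all partial derivatives D^α f(0) = 0 for every multi-index α with |α|₁ ≤ N. -/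
/-- The iterated partial derivative `D^α = ∂₁^{α₁} ⋯ ∂_d^{α_d}`. -/
noncomputable def Dalpha (d : ℕ) (α : Fin d → ℕ) (g : EuclideanSpace ℝ (Fin d) → ℂ) :
    EuclideanSpace ℝ (Fin d) → ℂ :=
  (List.ofFn (fun i => (pderiv' d i)^[α i])).foldr (· ∘ ·) id g

/-!
A finite exponential sum `f = ∑ c_k e^{ζ_k · x}` has `D^α f(0) = ∑ c_k ζ_k^α`, so the vanishing at `0`
of all derivatives of order at most `N` is a homogeneous linear system in the `c_k` with at most
`(N + 1)^2` equations, which has a nontrivial solution as soon as there are more frequencies than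
equations. On the circle `|k|^2 = 5^C` the Gaussian integers `(2 + i)^a (2 - i)^(C - a)`,
`0 ≤ a ≤ C`, are `C + 1` distinct lattice points, so `C = (N + 1)^2` suffices.
-/

open Complex

section ExpSum

variable {ι E : Type*} [NormedAddCommGroup E] [NormedSpace ℝ E]

noncomputable def expSum (s : Finset ι) (c : ι → ℂ) (L : ι → E →L[ℝ] ℂ) (x : E) : ℂ :=
  ∑ j ∈ s, c j * exp (L j x)

lemma hasFDerivAt_expSum (s : Finset ι) (c : ι → ℂ) (L : ι → E →L[ℝ] ℂ) (x : E) :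
    HasFDerivAt (expSum s c L) (∑ j ∈ s, (c j * exp (L j x)) • L j) x := by
  refine HasFDerivAt.fun_sum fun j _ => ?_
  have h := ((L j).hasFDerivAt (x := x)).cexp.const_mul (c j)
  rwa [smul_smul] at h

lemma fderiv_expSum_apply (s : Finset ι) (c : ι → ℂ) (L : ι → E →L[ℝ] ℂ) (x v : E) :
    fderiv ℝ (expSum s c L) x v = expSum s (fun j => c j * L j v) L x := by
  rw [(hasFDerivAt_expSum s c L x).fderiv]
  simp only [sum_apply, smul_apply, smul_eq_mul, expSum, mul_right_comm]

lemma expSum_apply_zero (s : Finset ι) (c : ι → ℂ) (L : ι → E →L[ℝ] ℂ) :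
    expSum s c L 0 = ∑ j ∈ s, c j := by
  simp [expSum]

end ExpSum

section PartialDerivatives

variable {ι : Type*} {d : ℕ} (s : Finset ι) (L : ι → EuclideanSpace ℝ (Fin d) →L[ℝ] ℂ)

lemma pderiv'_expSum (c : ι → ℂ) (i : Fin d) :
    pderiv' d i (expSum s c L) = expSum s (fun j => c j * L j (EuclideanSpace.single i 1)) L :=
  funext fun x => fderiv_expSum_apply s c L x _

lemma iterate_pderiv'_expSum (c : ι → ℂ) (i : Fin d) (n : ℕ) :
    (pderiv' d i)^[n] (expSum s c L) =
      expSum s (fun j => c j * L j (EuclideanSpace.single i 1) ^ n) L := by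
  induction n with
  | zero => simp
  | succ n ih =>
    rw [Function.iterate_succ_apply', ih, pderiv'_expSum]
    simp only [pow_succ, mul_assoc]

lemma foldr_map_iterate_pderiv'_expSum (c : ι → ℂ) (α : Fin d → ℕ) (l : List (Fin d)) :
    (l.map fun i => (pderiv' d i)^[α i]).foldr (· ∘ ·) id (expSum s c L) =
      expSum s (fun j => c j * (l.map fun i => L j (EuclideanSpace.single i 1) ^ α i).prod) L := by
  induction l with
  | nil => simp
  | cons i l ih =>
    simp only [List.map_cons, List.foldr_cons, Function.comp_apply, ih,
      iterate_pderiv'_expSum, List.prod_cons]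
    congr 1
    funext j
    ring

lemma Dalpha_expSum (c : ι → ℂ) (α : Fin d → ℕ) :
    Dalpha d α (expSum s c L) =
      expSum s (fun j => c j * ∏ i, L j (EuclideanSpace.single i 1) ^ α i) L := by
  rw [Dalpha, List.ofFn_eq_map, foldr_map_iterate_pderiv'_expSum]
  simp only [← List.ofFn_eq_map, List.prod_ofFn]

end PartialDerivatives

noncomputable def coordComb {d : ℕ} (ζ : Fin d → ℂ) : EuclideanSpace ℝ (Fin d) →L[ℝ] ℂ :=
  ∑ i, ζ i • ofRealCLM.comp (EuclideanSpace.proj i)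

lemma coordComb_apply {d : ℕ} (ζ : Fin d → ℂ) (x : EuclideanSpace ℝ (Fin d)) :
    coordComb ζ x = ∑ i, ζ i * x i := by
  simp [coordComb]

lemma coordComb_single {d : ℕ} (ζ : Fin d → ℂ) (i : Fin d) :
    coordComb ζ (EuclideanSpace.single i 1) = ζ i := by
  simp [coordComb_apply, apply_ite ((↑) : ℝ → ℂ)]

lemma exists_ne_zero_sum_smul_eq_zero_of_finrank_lt {K M ι : Type*} [Field K] [AddCommGroup M]
    [Module K M] [FiniteDimensional K M] (v : ι → M) {s : Finset ι}
    (hs : Module.finrank K M < s.card) :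
    ∃ g : ι → K, ∑ i ∈ s, g i • v i = 0 ∧ ∃ i ∈ s, g i ≠ 0 := by
  have hdep : ¬LinearIndepOn K v s := fun hv =>
    hs.not_ge (by simpa using hv.linearIndependent.fintype_card_le_finrank)
  simpa [linearIndepOn_finset_iff] using hdep

theorem exists_ne_zero_Dalpha_expSum_coordComb_eq_zero {ι : Type*} {d : ℕ} (s : Finset ι)
    (ζ : ι → Fin d → ℂ) (N : ℕ) (hs : (N + 1) ^ d < s.card) :
    ∃ c : ι → ℂ, (∃ j ∈ s, c j ≠ 0) ∧ ∀ α : Fin d → ℕ, (∀ i, α i ≤ N) →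
      Dalpha d α (expSum s c fun j => coordComb (ζ j)) 0 = 0 := by
  let moments (j : ι) : (Fin d → Fin (N + 1)) → ℂ := fun m => ∏ i, ζ j i ^ (m i : ℕ)
  obtain ⟨c, hc, hc0⟩ := exists_ne_zero_sum_smul_eq_zero_of_finrank_lt moments (K := ℂ)
    (by simpa [Module.finrank_fintype_fun_eq_card] using hs)
  refine ⟨c, hc0, fun α hα => ?_⟩
  have hmoment := congrFun hc fun i => ⟨α i, Nat.lt_succ_of_le (hα i)⟩
  simpa [Dalpha_expSum, expSum_apply_zero, coordComb_single, moments] using hmoment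

noncomputable def circlePoints (n : ℕ) : Finset (ℤ × ℤ) :=
  (Finset.Icc (-n : ℤ) n ×ˢ Finset.Icc (-n : ℤ) n).filter fun k => k.1 ^ 2 + k.2 ^ 2 = n

lemma mem_circlePoints {n : ℕ} {k : ℤ × ℤ} : k ∈ circlePoints n ↔ k.1 ^ 2 + k.2 ^ 2 = n := by
  simp only [circlePoints, Finset.mem_filter, Finset.mem_product, Finset.mem_Icc,
    and_iff_right_iff_imp]
  intro hk
  refine ⟨⟨?_, ?_⟩, ?_, ?_⟩ <;> nlinarith [sq_nonneg (k.1 + 1), sq_nonneg (k.1 - 1),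
    sq_nonneg (k.2 + 1), sq_nonneg (k.2 - 1)]

namespace GaussianInt

lemma two_add_i_pow_ne_two_sub_i_pow {m : ℕ} (hm : m ≠ 0) :
    (⟨2, 1⟩ : GaussianInt) ^ m ≠ ⟨2, -1⟩ ^ m := by
  intro h
  -- `i ↦ 2` is a ring map `ℤ[i] → ZMod 5` that kills `2 - i` but sends `2 + i` to `4`.
  have h5 := congrArg (Zsqrtd.lift ⟨(2 : ZMod 5), by decide⟩) h
  simp only [map_pow, Zsqrtd.lift_apply_apply] at h5
  norm_num [zero_pow hm] at h5
  have h4 : (4 : ZMod 5) ≠ 0 := by decide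
  have : Fact (Nat.Prime 5) := ⟨by norm_num⟩
  exact h4 (pow_eq_zero_iff hm |>.mp h5)

def circlePoint (C a : ℕ) : GaussianInt := ⟨2, 1⟩ ^ a * ⟨2, -1⟩ ^ (C - a)

lemma norm_circlePoint {C a : ℕ} (ha : a ≤ C) :
    (circlePoint C a).re ^ 2 + (circlePoint C a).im ^ 2 = 5 ^ C := by
  have hnorm : Zsqrtd.normMonoidHom (circlePoint C a) = 5 ^ C := by
    rw [circlePoint, map_mul, map_pow, map_pow,
      show Zsqrtd.normMonoidHom (⟨2, 1⟩ : GaussianInt) = 5 by decide,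
      show Zsqrtd.normMonoidHom (⟨2, -1⟩ : GaussianInt) = 5 by decide, ← pow_add,
      Nat.add_sub_cancel' ha]
  rw [← hnorm]
  change _ = Zsqrtd.norm _
  rw [Zsqrtd.norm_def]
  ring

lemma circlePoint_ne_of_lt {C a b : ℕ} (hab : a < b) (hb : b ≤ C) :
    circlePoint C a ≠ circlePoint C b := by
  obtain ⟨m, rfl⟩ := Nat.exists_eq_add_of_lt hab
  obtain ⟨n, rfl⟩ := Nat.exists_eq_add_of_le hb
  intro h
  have hcommon : (⟨2, 1⟩ ^ a * ⟨2, -1⟩ ^ n : GaussianInt) ≠ 0 := by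
    simp [show (⟨2, 1⟩ : GaussianInt) ≠ 0 by decide, show (⟨2, -1⟩ : GaussianInt) ≠ 0 by decide]
  rw [circlePoint, circlePoint, show a + m + 1 + n - a = m + 1 + n by omega,
    show a + m + 1 + n - (a + m + 1) = n by omega] at h
  refine two_add_i_pow_ne_two_sub_i_pow m.add_one_ne_zero (mul_left_cancel₀ hcommon ?_).symm
  linear_combination h

lemma circlePoint_injOn (C : ℕ) : Set.InjOn (circlePoint C) (Set.Iic C) := by
  intro a ha b hb hab
  by_contra hne
  rcases Nat.lt_or_gt_of_ne hne with h | h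
  · exact circlePoint_ne_of_lt h hb hab
  · exact circlePoint_ne_of_lt h ha hab.symm

end GaussianInt

open GaussianInt in
lemma card_circlePoints_five_pow (C : ℕ) : C + 1 ≤ (circlePoints (5 ^ C)).card := by
  have hmaps : Set.MapsTo (fun a => ((circlePoint C a).re, (circlePoint C a).im))
      (Finset.Iic C) (circlePoints (5 ^ C)) := fun a ha =>
    mem_circlePoints.mpr (by exact_mod_cast norm_circlePoint (Finset.mem_Iic.mp ha))
  have hinj : Set.InjOn (fun a => ((circlePoint C a).re, (circlePoint C a).im)) (Finset.Iic C) :=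
    Function.Injective.comp_injOn (g := fun z : GaussianInt => (z.re, z.im))
      (fun _ _ h => Zsqrtd.ext (congrArg Prod.fst h) (congrArg Prod.snd h))
      (by simpa using circlePoint_injOn C)
  simpa using Finset.card_le_card_of_injOn _ hmaps hinj

theorem stmt_9_general (N : ℕ) :
    ∃ (lam : ℕ) (I : Finset (ℤ × ℤ)) (μ : ℤ × ℤ → ℂ),
      (∀ k : ℤ × ℤ, k ∈ I ↔ k.1 ^ 2 + k.2 ^ 2 = (lam : ℤ)) ∧
      (∃ k ∈ I, μ k ≠ 0) ∧
      ∀ α : Fin 2 → ℕ, ∑ i, α i ≤ N →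
        Dalpha 2 α
          (fun x => ∑ k ∈ I, μ k *
            Complex.exp (Complex.I * ((k.1 : ℂ) * (x 0 : ℂ) + (k.2 : ℂ) * (x 1 : ℂ)))) 0 = 0 := by
  obtain ⟨μ, hμ, hD⟩ := exists_ne_zero_Dalpha_expSum_coordComb_eq_zero
    (circlePoints (5 ^ (N + 1) ^ 2)) (fun k => ![I * k.1, I * k.2]) N
    (card_circlePoints_five_pow _)
  refine ⟨_, _, μ, fun k => mem_circlePoints, hμ, fun α hα => ?_⟩
  convert hD α fun i => (Finset.single_le_sum (fun j _ => Nat.zero_le (α j))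
    (Finset.mem_univ i)).trans hα using 2
  funext x
  simp only [expSum, coordComb_apply, Fin.sum_univ_two, Matrix.cons_val_zero,
    Matrix.cons_val_one, mul_add, mul_assoc]

theorem stmt_9 (N : ℕ) (hN : 0 < N) :
    ∃ (lam : ℕ) (I : Finset (ℤ × ℤ)) (μ : ℤ × ℤ → ℂ),
      (∀ k : ℤ × ℤ, k ∈ I ↔ k.1 ^ 2 + k.2 ^ 2 = (lam : ℤ)) ∧
      (∃ k ∈ I, μ k ≠ 0) ∧
      ∀ α : Fin 2 → ℕ, ∑ i, α i ≤ N →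
        Dalpha 2 α
          (fun x => ∑ k ∈ I, μ k *
            Complex.exp (Complex.I * ((k.1 : ℂ) * (x 0 : ℂ) + (k.2 : ℂ) * (x 1 : ℂ)))) 0 = 0 :=
  stmt_9_general N
end

section
/- For every C ∈ ℕ and every width w > 0, there exist E₀ ∈ ℝ and a nonzero f ∈ Ran χ_{[E₀−w, E₀]}(−Δ) on 𝕋² such that f vanishes to order at least C at 0. -/
/-!
The circle `k₁² + k₂² = 25ⁿ` carries the `n + 1` lattice points `(3 + 4i)ʲ (3 - 4i)ⁿ⁻ʲ`,
`0 ≤ j ≤ n`; they are distinct because reduction modulo `2 - i` sends `3 + 4i` to `1` and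
`3 - 4i` to `0`. Once there are more than `C²` of them, linear algebra yields a nonzero `μ`
whose moments `∑ₖ μₖ k₁ᵖ k₂ʳ`, `p, r < C`, all vanish. Then the Taylor polynomials of degree
`< C` of the characters `e^{i k · x}` cancel in `∑ₖ μₖ e^{i k · x}`, which is hence `O(|x|^C)`.
-/

open Asymptotics Filter Topology Finset

/-- `f` vanishes to order (at least) `N` at `0`. -/
def VanishesToOrder2 (f : EuclideanSpace ℝ (Fin 2) → ℂ) (N : ℕ) : Prop :=
  ∃ C : ℝ, ∀ᶠ δ in nhdsWithin (0 : ℝ) (Set.Ioi 0),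
    ∀ x : EuclideanSpace ℝ (Fin 2), ‖x‖ ≤ δ → ‖f x‖ ≤ C * δ ^ N

theorem vanishesToOrder2_of_isBigO {f : EuclideanSpace ℝ (Fin 2) → ℂ} {N : ℕ}
    (h : f =O[𝓝 0] fun x => ‖x‖ ^ N) : VanishesToOrder2 f N := by
  obtain ⟨c, hc0, hc⟩ := h.exists_pos
  obtain ⟨ε, hε, hball⟩ := Metric.eventually_nhds_iff.mp hc.bound
  refine ⟨c, ?_⟩
  filter_upwards [Ioo_mem_nhdsGT hε] with δ hδ x hx
  calc ‖f x‖ ≤ c * ‖‖x‖ ^ N‖ := hball (by simpa using hx.trans_lt hδ.2)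
    _ ≤ c * δ ^ N := by
      rw [norm_pow, norm_norm]
      gcongr

theorem Complex.isBigO_exp_sub_sum_range (N : ℕ) :
    (fun z : ℂ => exp z - ∑ m ∈ range N, z ^ m / m.factorial) =O[𝓝 0] fun z => z ^ N := by
  refine IsBigO.of_bound (Real.exp 1) ?_
  filter_upwards [Metric.closedBall_mem_nhds (0 : ℂ) one_pos] with z hz
  rw [mem_closedBall_zero_iff] at hz
  calc _ ≤ ‖z‖ ^ N * Real.exp ‖z‖ := Complex.norm_exp_sub_sum_le_norm_mul_exp z N
    _ ≤ ‖z‖ ^ N * Real.exp 1 := by gcongr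
    _ = Real.exp 1 * ‖z ^ N‖ := by rw [norm_pow, mul_comm]

def latticePhase (k : ℤ × ℤ) (x : EuclideanSpace ℝ (Fin 2)) : ℂ :=
  (k.1 : ℂ) * (x 0 : ℂ) + (k.2 : ℂ) * (x 1 : ℂ)

theorem norm_latticePhase_le (k : ℤ × ℤ) (x : EuclideanSpace ℝ (Fin 2)) :
    ‖latticePhase k x‖ ≤ (|(k.1 : ℝ)| + |(k.2 : ℝ)|) * ‖x‖ := by
  have h0 : |x 0| ≤ ‖x‖ := by simpa using PiLp.norm_apply_le x 0
  have h1 : |x 1| ≤ ‖x‖ := by simpa using PiLp.norm_apply_le x 1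
  calc ‖latticePhase k x‖ ≤ |(k.1 : ℝ)| * |x 0| + |(k.2 : ℝ)| * |x 1| := by
        refine (norm_add_le _ _).trans_eq ?_
        simp
    _ ≤ (|(k.1 : ℝ)| + |(k.2 : ℝ)|) * ‖x‖ := by
        rw [add_mul]
        gcongr

theorem isBigO_exp_latticePhase_sub_sum_range (k : ℤ × ℤ) (N : ℕ) :
    (fun x => Complex.exp (Complex.I * latticePhase k x) -
        ∑ m ∈ range N, (Complex.I * latticePhase k x) ^ m / m.factorial) =O[𝓝 0]
      fun x => ‖x‖ ^ N := by
  have hlin : (fun x => Complex.I * latticePhase k x) =O[𝓝 0] fun x => ‖x‖ :=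
    IsBigO.of_bound (|(k.1 : ℝ)| + |(k.2 : ℝ)|) (Eventually.of_forall fun x => by
      simpa using norm_latticePhase_le k x)
  exact ((Complex.isBigO_exp_sub_sum_range N).comp_tendsto
    (hlin.trans_tendsto tendsto_norm_zero)).trans (hlin.pow N)

theorem vanishesToOrder2_sum_exp_latticePhase {N : ℕ} {s : Finset (ℤ × ℤ)} {μ : ℤ × ℤ → ℂ}
    (hμ : ∀ n < N, ∀ x, ∑ k ∈ s, μ k * latticePhase k x ^ n = 0) :
    VanishesToOrder2 (fun x => ∑ k ∈ s, μ k * Complex.exp (Complex.I * latticePhase k x)) N := by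
  have hTaylor : ∀ x, ∑ k ∈ s, μ k * ∑ m ∈ range N,
      (Complex.I * latticePhase k x) ^ m / m.factorial = 0 := fun x => by
    simp_rw [mul_sum, mul_pow]
    rw [sum_comm]
    refine sum_eq_zero fun m hm => ?_
    calc ∑ k ∈ s, μ k * (Complex.I ^ m * latticePhase k x ^ m / m.factorial)
        = (∑ k ∈ s, μ k * latticePhase k x ^ m) * (Complex.I ^ m / m.factorial) := by
          rw [sum_mul]; congr! 1 with k; ring
      _ = 0 := by rw [hμ m (mem_range.mp hm) x, zero_mul]
  apply vanishesToOrder2_of_isBigO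
  have hsplit : (fun x => ∑ k ∈ s, μ k * Complex.exp (Complex.I * latticePhase k x)) =
      fun x => ∑ k ∈ s, μ k * (Complex.exp (Complex.I * latticePhase k x) -
        ∑ m ∈ range N, (Complex.I * latticePhase k x) ^ m / m.factorial) := by
    ext x
    simp only [mul_sub, sum_sub_distrib, hTaylor, sub_zero]
  rw [hsplit]
  exact IsBigO.fun_sum fun k _ =>
    (isBigO_exp_latticePhase_sub_sum_range k N).const_mul_left (μ k)

theorem sum_mul_add_pow_eq_zero {N : ℕ} {s : Finset (ℤ × ℤ)} {μ : ℤ × ℤ → ℂ}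
    (hμ : ∀ p < N, ∀ r < N, ∑ k ∈ s, μ k * ((k.1 : ℂ) ^ p * (k.2 : ℂ) ^ r) = 0)
    {n : ℕ} (hn : n < N) (a b : ℂ) :
    ∑ k ∈ s, μ k * ((k.1 : ℂ) * a + (k.2 : ℂ) * b) ^ n = 0 := by
  simp_rw [add_pow, mul_sum]
  rw [sum_comm]
  refine sum_eq_zero fun p hp => ?_
  have hpn : p ≤ n := Nat.lt_succ_iff.mp (mem_range.mp hp)
  calc ∑ k ∈ s, μ k * (((k.1 : ℂ) * a) ^ p * ((k.2 : ℂ) * b) ^ (n - p) * n.choose p)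
      = (∑ k ∈ s, μ k * ((k.1 : ℂ) ^ p * (k.2 : ℂ) ^ (n - p))) *
          (a ^ p * b ^ (n - p) * n.choose p) := by
        rw [sum_mul]; congr! 1 with k; ring
    _ = 0 := by rw [hμ p (by omega) (n - p) (by omega), zero_mul]

theorem exists_ne_zero_moments_eq_zero (N : ℕ) (s : Finset (ℤ × ℤ)) (hs : N * N < s.card) :
    ∃ μ : ℤ × ℤ → ℂ, (∃ k ∈ s, μ k ≠ 0) ∧
      ∀ p < N, ∀ r < N, ∑ k ∈ s, μ k * ((k.1 : ℂ) ^ p * (k.2 : ℂ) ^ r) = 0 := by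
  let moments : ℤ × ℤ → Fin N × Fin N → ℂ := fun k pr =>
    (k.1 : ℂ) ^ (pr.1 : ℕ) * (k.2 : ℂ) ^ (pr.2 : ℕ)
  have hdep : ¬ LinearIndepOn ℂ moments (s : Set (ℤ × ℤ)) := fun hind => by
    have := hind.fintype_card_le_finrank
    simp only [SetLike.coe_sort_coe, Fintype.card_coe, Module.finrank_fintype_fun_eq_card,
      Fintype.card_prod, Fintype.card_fin] at this
    omega
  obtain ⟨μ, hsum, hne⟩ := not_linearIndepOn_finset_iff.mp hdep
  refine ⟨μ, hne, fun p hp r hr => ?_⟩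
  simpa [moments] using congrFun hsum (⟨p, hp⟩, ⟨r, hr⟩)

namespace GaussianInt

def threeAddFourI : GaussianInt := ⟨3, 4⟩

def reduceModTwoSubI : GaussianInt →+* ZMod 5 := Zsqrtd.lift ⟨2, by decide⟩

theorem reduceModTwoSubI_threeAddFourI : reduceModTwoSubI threeAddFourI = 1 :=
  rfl

theorem reduceModTwoSubI_star_threeAddFourI : reduceModTwoSubI (star threeAddFourI) = 0 :=
  rfl

theorem norm_pow_mul_star_pow (z : GaussianInt) (j n : ℕ) :
    (z ^ j * star z ^ n).norm = z.norm ^ (j + n) := by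
  have norm_pow (w : GaussianInt) (k : ℕ) : (w ^ k).norm = w.norm ^ k :=
    map_pow Zsqrtd.normMonoidHom w k
  rw [Zsqrtd.norm_mul, norm_pow, norm_pow, Zsqrtd.norm_conj, pow_add]

theorem injOn_pow_mul_star_pow (n : ℕ) :
    Set.InjOn (fun j => threeAddFourI ^ j * star threeAddFourI ^ (n - j)) (Set.Iic n) := by
  intro j hj j' hj' h
  wlog hle : j ≤ j' generalizing j j'
  · exact (this hj' hj h.symm (by omega)).symm
  obtain ⟨d, rfl⟩ := Nat.exists_eq_add_of_le hle
  have hne : threeAddFourI ^ j * star threeAddFourI ^ (n - (j + d)) ≠ 0 := by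
    apply mul_ne_zero <;> apply pow_ne_zero <;> decide
  have hpow : star threeAddFourI ^ d = threeAddFourI ^ d := by
    refine mul_left_cancel₀ hne ?_
    have hjd : j + d ≤ n := hj'
    dsimp only at h
    rw [show n - j = n - (j + d) + d by omega, pow_add, pow_add] at h
    linear_combination h
  have := congrArg reduceModTwoSubI hpow
  simp only [map_pow, reduceModTwoSubI_threeAddFourI, reduceModTwoSubI_star_threeAddFourI,
    one_pow] at this
  obtain rfl | hd := Nat.eq_zero_or_pos d
  · rfl
  · rw [zero_pow hd.ne'] at this
    exact absurd this (by decide)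

theorem exists_finset_sq_add_sq_eq (n : ℕ) :
    ∃ (R : ℤ) (s : Finset (ℤ × ℤ)), n < s.card ∧ ∀ k ∈ s, k.1 ^ 2 + k.2 ^ 2 = R := by
  let z : ℕ → GaussianInt := fun j => threeAddFourI ^ j * star threeAddFourI ^ (n - j)
  refine ⟨25 ^ n, (range (n + 1)).image fun j => ((z j).re, (z j).im), ?_, ?_⟩
  · rw [card_image_of_injOn, card_range]
    · omega
    intro j hj j' hj' h
    simp only [coe_range, Set.mem_Iio, Prod.mk.injEq] at hj hj' h
    exact injOn_pow_mul_star_pow n (Set.mem_Iic.mpr (by omega)) (Set.mem_Iic.mpr (by omega))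
      (Zsqrtd.ext h.1 h.2)
  · simp only [mem_image, mem_range]
    rintro _ ⟨j, hj, rfl⟩
    have hnorm := norm_pow_mul_star_pow threeAddFourI j (n - j)
    rw [Nat.add_sub_cancel' (by omega), show threeAddFourI.norm = 25 by rfl,
      Zsqrtd.norm_def] at hnorm
    linear_combination hnorm

end GaussianInt

/-- For every `C` and every width `w > 0` there are `E₀` and a nonzero function in the
range of the spectral projector `χ_{[E₀ - w, E₀]}(-Δ)` on `𝕋²` — i.e. a nontrivial
combination of exponentials `e^{i k · x}` with `|k|² ∈ [E₀ - w, E₀]` — vanishing to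
order at least `C` at `0`. -/
theorem stmt_17 (C : ℕ) (w : ℝ) (hw : 0 < w) :
    ∃ (E₀ : ℝ) (I : Finset (ℤ × ℤ)) (μ : ℤ × ℤ → ℂ),
      (∀ k ∈ I, E₀ - w ≤ ((k.1 ^ 2 + k.2 ^ 2 : ℤ) : ℝ) ∧ ((k.1 ^ 2 + k.2 ^ 2 : ℤ) : ℝ) ≤ E₀) ∧
      (∃ k ∈ I, μ k ≠ 0) ∧
      VanishesToOrder2
        (fun x => ∑ k ∈ I, μ k *
          Complex.exp (Complex.I * ((k.1 : ℂ) * (x 0 : ℂ) + (k.2 : ℂ) * (x 1 : ℂ)))) C := by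
  obtain ⟨R, I, hcard, hI⟩ := GaussianInt.exists_finset_sq_add_sq_eq (C * C)
  obtain ⟨μ, hμ, hmoments⟩ := exists_ne_zero_moments_eq_zero C I hcard
  refine ⟨R, I, μ, fun k hk => ?_, hμ, vanishesToOrder2_sum_exp_latticePhase
    fun n hn x => sum_mul_add_pow_eq_zero hmoments hn _ _⟩
  rw [hI k hk]
  exact ⟨by linarith, le_rfl⟩
end
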